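/- arXiv:1607.06022 — 6 statements merged into one kernel-verified Lean document; each statement's English description precedes it below -/
import Mathlib

section
/- Let X be an abstract simplicial complex on a node set N, let A be its activation sheaf, and let s be a global section of A. If the active region active(s,n) of a node n is nonempty, then the vertex {n} belongs to active(s,n); moreover every cell c ∈ active(s,n) has a common coface with {n} lying in active(s,n), i.e., there exists d ∈ X with c ⊆ d, n ∈ d, and s(d) = n (so active(s,n) is connected through the vertex {n}). -/
open scoped Classical

/-- The stalk (without the distinguished symbol `⊥`) of the activation sheaf at a cell
`c` of the complex `X`: the set of nodes having a coface in common with `c`. -/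
def stalk {N : Type*} (X : Set (Finset N)) (c : Finset N) : Set N :=
  {n | ∃ d ∈ X, c ⊆ d ∧ n ∈ d}

/-- The restriction map of the activation sheaf along `c ⊆ d`, acting on `Option N`
where `none` plays the role of `⊥`: it sends `n` to `n` if `n` lies in the stalk at
`d`, and to `⊥` otherwise (and `⊥` to `⊥`). -/
noncomputable def restrict {N : Type*} (X : Set (Finset N)) (d : Finset N) :
    Option N → Option N :=
  fun x => x.bind fun n => if n ∈ stalk X d then some n else none

/-- A global section of the activation sheaf on `X`: a function assigning to every
cell `c ∈ X` an element of its stalk `A(c) = stalk X c ∪ {⊥}`, compatible with all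
the restriction maps. -/
def IsGlobalSection {N : Type*} (X : Set (Finset N)) (s : Finset N → Option N) : Prop :=
  (∀ c ∈ X, ∀ n : N, s c = some n → n ∈ stalk X c) ∧
  (∀ c ∈ X, ∀ d ∈ X, c ⊆ d → restrict X d (s c) = s d)

/-- The active region of a node `n` in a global section `s`: the set of cells of `X`
on which `s` takes the value `n`. -/
def active {N : Type*} (X : Set (Finset N)) (s : Finset N → Option N) (n : N) :
    Set (Finset N) :=
  {c | c ∈ X ∧ s c = some n}

/-- If the active region of a node `n` in a global section `s` is
nonempty, then the vertex `{n}` belongs to it; moreover every cell `c` of the active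
region has a common coface `d` with `{n}` lying in the active region (`c ⊆ d`,
`n ∈ d`, `s d = n`), so the active region is connected through the vertex `{n}`. -/
theorem active_region_contains_vertex_and_connected
    {N : Type*} (X : Set (Finset N))
    (hne : ∀ c ∈ X, c.Nonempty)
    (hdown : ∀ c ∈ X, ∀ b : Finset N, b.Nonempty → b ⊆ c → b ∈ X)
    (s : Finset N → Option N) (hs : IsGlobalSection X s) (n : N)
    (hact : (active X s n).Nonempty) :
    ({n} : Finset N) ∈ active X s n ∧
      ∀ c ∈ active X s n, ∃ d ∈ X, c ⊆ d ∧ n ∈ d ∧ s d = some n := by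
  obtain ⟨hstalk, hcompat⟩ := hs
  -- key lemma: from any active cell, get a coface d with n ∈ d and s d = some n
  have key : ∀ c ∈ active X s n, ∃ d ∈ X, c ⊆ d ∧ n ∈ d ∧ s d = some n := by
    intro c hc
    obtain ⟨hcX, hcs⟩ := hc
    obtain ⟨d, hdX, hcd, hnd⟩ := hstalk c hcX n hcs
    refine ⟨d, hdX, hcd, hnd, ?_⟩
    have := hcompat c hcX d hdX hcd
    rw [hcs] at this
    simp only [restrict, Option.bind_some] at this
    rw [if_pos (show n ∈ stalk X d from ⟨d, hdX, subset_refl d, hnd⟩)] at this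
    exact this.symm
  refine ⟨?_, key⟩
  obtain ⟨c, hc⟩ := hact
  obtain ⟨d, hdX, hcd, hnd, hsd⟩ := key c hc
  have hnX : ({n} : Finset N) ∈ X :=
    hdown d hdX {n} (Finset.singleton_nonempty n) (Finset.singleton_subset_iff.mpr hnd)
  refine ⟨hnX, ?_⟩
  have := hcompat {n} hnX d hdX (Finset.singleton_subset_iff.mpr hnd)
  rw [hsd] at this
  cases hs : s {n} with
  | none => rw [hs] at this; simp [restrict] at this
  | some m =>
    rw [hs] at this
    simp only [restrict, Option.bind_some] at this
    by_cases hm : m ∈ stalk X d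
    · rw [if_pos hm] at this; exact this
    · rw [if_neg hm] at this; exact absurd this (by simp)
end

section
/- Let X be an abstract simplicial complex on a node set N, let A be its activation sheaf, and let s be a global section of A. Then for any two distinct nodes m ≠ n in N, the star of the active region of n is disjoint from the active region of m: st(active(s,n)) ∩ active(s,m) = ∅. -/
open scoped Classical

/-- For a global section `s` of the activation sheaf and distinct nodes
`m ≠ n`, the star of the active region of `n` (the set of cells of `X` having a face
in `active X s n`) is disjoint from the active region of `m`. -/
theorem star_of_active_region_disjoint
    {N : Type*} (X : Set (Finset N))
    (hne : ∀ c ∈ X, c.Nonempty)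
    (hdown : ∀ c ∈ X, ∀ b : Finset N, b.Nonempty → b ⊆ c → b ∈ X)
    (s : Finset N → Option N) (hs : IsGlobalSection X s)
    (m n : N) (hmn : m ≠ n) :
    {c | c ∈ X ∧ ∃ b ∈ active X s n, b ⊆ c} ∩ active X s m = ∅ := by
  ext c
  simp only [Set.mem_inter_iff, Set.mem_setOf_eq, Set.mem_empty_iff_false, iff_false]
  rintro ⟨⟨hcX, b, ⟨hbX, hbn⟩, hbc⟩, hcX', hcm⟩
  have := hs.2 b hbX c hcX hbc
  rw [hbn, hcm] at this
  simp only [restrict, Option.bind_some] at this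
  split_ifs at this with h
  · exact hmn (Option.some.inj this).symm
end

section
/- Let X be an abstract simplicial complex on a node set N, let A be its activation sheaf, and let s be a global section of A. Then the support of s, namely supp(s) = {c ∈ X : s(c) ≠ ⊥}, is the disjoint union of the active regions of the nodes: supp(s) = ⋃_{n ∈ N} active(s,n), the sets active(s,n) for distinct n are pairwise disjoint, and each nonempty active(s,n) is a closed subcomplex of X. -/
open scoped Classical

/-- The support of a global section `s` (the cells of `X` where
`s ≠ ⊥`) is the disjoint union of the active regions of the nodes: it equals
`⋃ n, active X s n`, the active regions of distinct nodes are pairwise disjoint, and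
each active region is a closed subcomplex of `X` (closed under nonempty subsets). -/
theorem support_is_disjoint_union_of_active_regions
    {N : Type*} (X : Set (Finset N))
    (hne : ∀ c ∈ X, c.Nonempty)
    (hdown : ∀ c ∈ X, ∀ b : Finset N, b.Nonempty → b ⊆ c → b ∈ X)
    (s : Finset N → Option N) (hs : IsGlobalSection X s) :
    {c | c ∈ X ∧ s c ≠ none} = (⋃ n : N, active X s n) ∧
      (∀ m n : N, m ≠ n → active X s m ∩ active X s n = ∅) ∧
      (∀ n : N, ∀ c ∈ active X s n, ∀ b : Finset N, b.Nonempty → b ⊆ c →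
        b ∈ active X s n) := by
  refine ⟨?_, ?_, ?_⟩
  · ext c
    simp only [Set.mem_setOf_eq, Set.mem_iUnion, active]
    constructor
    · rintro ⟨hc, hne'⟩
      cases h : s c with
      | none => exact absurd h hne'
      | some n => exact ⟨n, hc, rfl⟩
    · rintro ⟨n, hc, h⟩
      exact ⟨hc, fun hnone => by rw [hnone] at h; exact nomatch h⟩
  · intro m n hmn
    ext c
    simp only [Set.mem_inter_iff, active, Set.mem_setOf_eq, Set.mem_empty_iff_false,
      iff_false]
    rintro ⟨⟨-, hm⟩, -, hn⟩
    exact hmn (Option.some.inj (hm.symm.trans hn))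
  · rintro n c ⟨hc, hsc⟩ b hbne hbc
    have hb : b ∈ X := hdown c hc b hbne hbc
    have := hs.2 b hb c hc hbc
    rw [hsc] at this
    refine ⟨hb, ?_⟩
    cases h : s b with
    | none => rw [h] at this; simp [restrict] at this
    | some m =>
      rw [h] at this
      rw [restrict] at this
      simp only [Option.bind] at this
      split_ifs at this with hst
      · exact this
end

section
/- Let X be an abstract simplicial complex on a node set N, let A be its activation sheaf, and let s be a global section of A. If the active region active(s,n) of a node n is nonempty, then active(s,n) equals the set of all cells of X that have a common coface with the vertex {n}: active(s,n) = {c ∈ X : there exists d ∈ X with c ⊆ d and n ∈ d}. -/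
open scoped Classical

/-- If the active region of a node `n` in a global section `s` is
nonempty, then it equals the set of all cells of `X` that have a common coface with
the vertex `{n}`, i.e. `{c ∈ X | ∃ d ∈ X, c ⊆ d ∧ n ∈ d}`. -/
theorem active_region_eq_cells_with_common_coface
    {N : Type*} (X : Set (Finset N))
    (hne : ∀ c ∈ X, c.Nonempty)
    (hdown : ∀ c ∈ X, ∀ b : Finset N, b.Nonempty → b ⊆ c → b ∈ X)
    (s : Finset N → Option N) (hs : IsGlobalSection X s) (n : N)
    (hact : (active X s n).Nonempty) :
    active X s n = {c | c ∈ X ∧ ∃ d ∈ X, c ⊆ d ∧ n ∈ d} := by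
  obtain ⟨hstalk, hcomp⟩ := hs
  obtain ⟨c0, hc0X, hc0s⟩ := hact
  obtain ⟨d0, hd0X, hcd0, hnd0⟩ := hstalk c0 hc0X n hc0s
  -- s d0 = some n
  have hsd0 : s d0 = some n := by
    have := hcomp c0 hc0X d0 hd0X hcd0
    rw [hc0s] at this
    simp only [restrict, Option.bind_some] at this
    rw [if_pos ⟨d0, hd0X, subset_rfl, hnd0⟩] at this
    exact this.symm
  have hnX : ({n} : Finset N) ∈ X :=
    hdown d0 hd0X {n} ⟨n, Finset.mem_singleton_self n⟩ (Finset.singleton_subset_iff.2 hnd0)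
  have hsn : s {n} = some n := by
    have := hcomp {n} hnX d0 hd0X (Finset.singleton_subset_iff.2 hnd0)
    rw [hsd0] at this
    cases h : s ({n} : Finset N) with
    | none => rw [h] at this; simp [restrict] at this
    | some m =>
      rw [h] at this
      simp only [restrict, Option.bind_some] at this
      split_ifs at this with hm
      · exact this
  ext c
  constructor
  · rintro ⟨hcX, hcs⟩
    exact ⟨hcX, hstalk c hcX n hcs⟩
  · rintro ⟨hcX, d, hdX, hcd, hnd⟩
    refine ⟨hcX, ?_⟩
    have hsd : s d = some n := by
      have := hcomp {n} hnX d hdX (Finset.singleton_subset_iff.2 hnd)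
      rw [hsn] at this
      simp only [restrict, Option.bind_some] at this
      rw [if_pos ⟨d, hdX, subset_rfl, hnd⟩] at this
      exact this.symm
    have := hcomp c hcX d hdX hcd
    rw [hsd] at this
    cases h : s c with
    | none => rw [h] at this; simp [restrict] at this
    | some m =>
      rw [h] at this
      simp only [restrict, Option.bind_some] at this
      split_ifs at this with hm
      · exact this
end

section
/- Let X be an abstract simplicial complex on a node set N and let A be its activation sheaf. The active region of a node is independent of the global section: if r and s are global sections of A and n ∈ N is a node whose active regions active(s,n) and active(r,n) are both nonempty, then active(s,n) = active(r,n). -/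
open scoped Classical

lemma restrict_eq_some {N : Type*} (X : Set (Finset N)) (d : Finset N)
    (x : Option N) (n : N) (h : restrict X d x = some n) : x = some n := by
  cases x with
  | none => simp [restrict] at h
  | some m =>
    simp only [restrict, Option.bind_some] at h
    split at h
    · simpa using h
    · simp at h

lemma mem_stalk_self {N : Type*} (X : Set (Finset N)) {d : Finset N}
    (hd : d ∈ X) {n : N} (hn : n ∈ d) : n ∈ stalk X d :=
  ⟨d, hd, subset_refl d, hn⟩

lemma vertex_some {N : Type*} (X : Set (Finset N))
    (hdown : ∀ c ∈ X, ∀ b : Finset N, b.Nonempty → b ⊆ c → b ∈ X)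
    {s : Finset N → Option N} (hs : IsGlobalSection X s) {n : N}
    (hact : (active X s n).Nonempty) : {n} ∈ X ∧ s {n} = some n := by
  obtain ⟨c, hcX, hcn⟩ := hact
  obtain ⟨d, hdX, hcd, hnd⟩ := hs.1 c hcX n hcn
  have hsd : s d = some n := by
    have := hs.2 c hcX d hdX hcd
    rw [hcn] at this
    simpa [restrict, mem_stalk_self X hdX hnd] using this.symm
  have hnX : ({n} : Finset N) ∈ X :=
    hdown d hdX {n} (Finset.singleton_nonempty n) (Finset.singleton_subset_iff.mpr hnd)
  refine ⟨hnX, ?_⟩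
  have := hs.2 {n} hnX d hdX (Finset.singleton_subset_iff.mpr hnd)
  rw [hsd] at this
  exact restrict_eq_some X d _ n this

lemma active_eq_stalk {N : Type*} (X : Set (Finset N))
    (hdown : ∀ c ∈ X, ∀ b : Finset N, b.Nonempty → b ⊆ c → b ∈ X)
    {s : Finset N → Option N} (hs : IsGlobalSection X s) {n : N}
    (hact : (active X s n).Nonempty) :
    active X s n = {c | c ∈ X ∧ n ∈ stalk X c} := by
  obtain ⟨hnX, hvn⟩ := vertex_some X hdown hs hact
  ext c
  constructor
  · rintro ⟨hcX, hcn⟩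
    exact ⟨hcX, hs.1 c hcX n hcn⟩
  · rintro ⟨hcX, d, hdX, hcd, hnd⟩
    have hsd : s d = some n := by
      have := hs.2 {n} hnX d hdX (Finset.singleton_subset_iff.mpr hnd)
      rw [hvn] at this
      simpa [restrict, mem_stalk_self X hdX hnd] using this.symm
    have := hs.2 c hcX d hdX hcd
    rw [hsd] at this
    exact ⟨hcX, restrict_eq_some X d _ n this⟩

/-- The active region of a node is independent of the global section:
if `r` and `s` are global sections of the activation sheaf and the active regions of
a node `n` in both are nonempty, then they coincide. -/
theorem active_region_independent_of_section
    {N : Type*} (X : Set (Finset N))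
    (hne : ∀ c ∈ X, c.Nonempty)
    (hdown : ∀ c ∈ X, ∀ b : Finset N, b.Nonempty → b ⊆ c → b ∈ X)
    (r s : Finset N → Option N)
    (hr : IsGlobalSection X r) (hs : IsGlobalSection X s) (n : N)
    (hract : (active X r n).Nonempty) (hsact : (active X s n).Nonempty) :
    active X s n = active X r n := by
  rw [active_eq_stalk X hdown hs hsact, active_eq_stalk X hdown hr hract]
end

section
/- Let X be an abstract simplicial complex on a finite node set N such that every n ∈ N is a vertex of X, let k be a field, and let the vector activation sheaf assign to each cell c ∈ X the k-vector space with basis A(c) \ {⊥} (equivalently, the space of functions A(c)\{⊥} → k), with restriction map along c ⊆ d given by the basis projection (restriction of functions along the inclusion A(d)\{⊥} ⊆ A(c)\{⊥}). Then the space of global sections of the vector activation sheaf — families (v_c)_{c ∈ X} with v_c : A(c)\{⊥} → k such that for all c ⊆ d in X, v_d is the restriction of v_c to A(d)\{⊥} — is linearly isomorphic to the space of all functions N → k, via the map sending t : N → k to the family v_c = t restricted to A(c)\{⊥}. In particular its dimension equals the total number of nodes |N|. -/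
/-- Let `X` be an abstract simplicial complex on a finite node set `N`
in which every node is a vertex, and let `k` be a field.  The vector activation sheaf
assigns to each cell `c ∈ X` the `k`-vector space of functions `stalk X c → k` (the
space with basis `A(c) \ {⊥}`), with restriction along `c ⊆ d` given by restriction of
functions (basis projection).  Then the space `Sec` of global sections of the vector
activation sheaf — families `(v_c)` with `v_c : stalk X c → k` compatible with all the
restriction maps — is linearly isomorphic to the space of all functions `N → k`, via
the map sending `t : N → k` to the family `v_c = t|_{stalk X c}`.  In particular the
dimension of `Sec` equals the total number of nodes `|N|`. -/
theorem vector_activation_sheaf_sections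
    {N : Type*} [Fintype N] (k : Type*) [Field k]
    (X : Set (Finset N))
    (hne : ∀ c ∈ X, c.Nonempty)
    (hdown : ∀ c ∈ X, ∀ b : Finset N, b.Nonempty → b ⊆ c → b ∈ X)
    (hvert : ∀ n : N, ({n} : Finset N) ∈ X)
    (Sec : Submodule k (∀ c : {c : Finset N // c ∈ X}, ↥(stalk X c.1) → k))
    (hSec : ∀ v : ∀ c : {c : Finset N // c ∈ X}, ↥(stalk X c.1) → k,
      v ∈ Sec ↔ ∀ c d : {c : Finset N // c ∈ X}, c.1 ⊆ d.1 →
        ∀ (n : N) (h1 : n ∈ stalk X c.1) (h2 : n ∈ stalk X d.1),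
          v d ⟨n, h2⟩ = v c ⟨n, h1⟩) :
    (∃ e : (N → k) ≃ₗ[k] Sec,
      ∀ (t : N → k) (c : {c : Finset N // c ∈ X}) (n : N) (h : n ∈ stalk X c.1),
        (e t).1 c ⟨n, h⟩ = t n) ∧
    Module.finrank k Sec = Fintype.card N := by
  have hstalk : ∀ n : N, n ∈ stalk X ({n} : Finset N) :=
    fun n => ⟨{n}, hvert n, subset_rfl, Finset.mem_singleton_self n⟩
  -- the forward map
  have hmem : ∀ t : N → k,
      (fun (c : {c : Finset N // c ∈ X}) (p : ↥(stalk X c.1)) => t p.1) ∈ Sec := by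
    intro t
    rw [hSec]
    intro c d _ n h1 h2
    rfl
  -- key: a section is determined by its values at singletons
  have key : ∀ v ∈ Sec, ∀ (c : {c : Finset N // c ∈ X}) (n : N) (h : n ∈ stalk X c.1),
      v c ⟨n, h⟩ = v ⟨{n}, hvert n⟩ ⟨n, hstalk n⟩ := by
    intro v hv c n h
    obtain ⟨d, hdX, hcd, hnd⟩ := h
    have hdstalk : n ∈ stalk X d := ⟨d, hdX, subset_rfl, hnd⟩
    have h1 := (hSec v).mp hv c ⟨d, hdX⟩ hcd n ⟨d, hdX, hcd, hnd⟩ hdstalk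
    have h2 := (hSec v).mp hv ⟨{n}, hvert n⟩ ⟨d, hdX⟩
      (Finset.singleton_subset_iff.mpr hnd) n (hstalk n) hdstalk
    rw [← h1, h2]
  let f : (N → k) →ₗ[k] Sec :=
    { toFun := fun t => ⟨fun c p => t p.1, hmem t⟩
      map_add' := fun _ _ => rfl
      map_smul' := fun _ _ => rfl }
  let g : Sec →ₗ[k] (N → k) :=
    { toFun := fun v n => v.1 ⟨{n}, hvert n⟩ ⟨n, hstalk n⟩
      map_add' := fun _ _ => rfl
      map_smul' := fun _ _ => rfl }
  have hgf : g.comp f = LinearMap.id := by ext t n; rfl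
  have hfg : f.comp g = LinearMap.id := by
    ext v c p
    show v.1 ⟨{p.1}, hvert p.1⟩ ⟨p.1, hstalk p.1⟩ = v.1 c p
    exact (key v.1 v.2 c p.1 p.2).symm
  let e : (N → k) ≃ₗ[k] Sec := LinearEquiv.ofLinear f g hfg hgf
  constructor
  · exact ⟨e, fun t c n h => rfl⟩
  · rw [← LinearEquiv.finrank_eq e, Module.finrank_pi]
end
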